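/- arXiv:1801.06915 — 2 statements merged into one kernel-verified Lean document; each statement's English description precedes it below -/
import Mathlib

section
/- Let k be an algebraically closed field of characteristic 2, let n ≥ 3, and let x ∈ sp(2n,k) satisfy x·x = 0 (as matrices) and rank x = 1. Set e := max(8, 2n). Then there exist g₁, …, g_e ∈ Sp(2n,k) such that the smallest Lie subalgebra of the 2n×2n matrices containing g₁xg₁⁻¹, …, g_e x g_e⁻¹ contains the subalgebra 𝔫. -/
/-!
In characteristic 2 the rank-one elements of `sp(2n,k)` are the `c • v vᵀ J`, and
`⁅u uᵀ J, w wᵀ J⁆ = ω(u, w) • (u wᵀ - w uᵀ) J` with `ω(u, w) = uᵀ J w`. Since `Sp(2n,k)` acts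
transitively on nonzero vectors (a product of two transvections suffices), the conjugates of `x`
include `c • w wᵀ J` for every `w ≠ 0`. Over an infinite field one can pick `2n` vectors
`wᵢ = eᵢ + sᵢ 𝟙` that span `k²ⁿ` and are pairwise non-orthogonal for `ω`. The Lie algebra generated
by the corresponding `2n` conjugates then contains every `(u wᵀ - w uᵀ) J`, and these span a space
containing `𝔫` (even `𝔪`): if `a J` and `b J` are symmetric, then `⁅a, b⁆ = (C - Cᵀ) J` for
`C = a b J`.
-/

open Matrix

noncomputable section

attribute [local instance 100] LieRing.ofAssociativeRing

/-- The matrix of the standard symplectic form: `[[0, Iₙ], [−Iₙ, 0]]`. -/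
def spJ (k : Type*) [Field k] (n : ℕ) :
    Matrix (Fin n ⊕ Fin n) (Fin n ⊕ Fin n) k :=
  Matrix.fromBlocks 0 1 (-1) 0

/-- The symplectic Lie algebra `sp(2n,k) = {x : xᵀJ + Jx = 0}`, as a subset of the
matrix Lie algebra (with bracket `⁅x,y⁆ = x*y - y*x`). -/
def spSet (k : Type*) [Field k] (n : ℕ) :
    Set (Matrix (Fin n ⊕ Fin n) (Fin n ⊕ Fin n) k) :=
  {x | xᵀ * spJ k n + spJ k n * x = 0}

/-- The symplectic group `Sp(2n,k) = {g : gᵀJg = J}`. -/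
def SpGroup (k : Type*) [Field k] (n : ℕ) :
    Set (Matrix (Fin n ⊕ Fin n) (Fin n ⊕ Fin n) k) :=
  {g | gᵀ * spJ k n * g = spJ k n}

/-- The derived subalgebra `𝔪 = ⁅sp(2n,k), sp(2n,k)⁆`, i.e. the span of all brackets of
pairs of elements of `sp(2n,k)`. -/
def spm (k : Type*) [Field k] (n : ℕ) :
    Submodule k (Matrix (Fin n ⊕ Fin n) (Fin n ⊕ Fin n) k) :=
  Submodule.span k {m | ∃ x ∈ spSet k n, ∃ y ∈ spSet k n, m = x * y - y * x}

/-- The second derived subalgebra `𝔫 = ⁅𝔪, 𝔪⁆`. -/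
def spn (k : Type*) [Field k] (n : ℕ) :
    Submodule k (Matrix (Fin n ⊕ Fin n) (Fin n ⊕ Fin n) k) :=
  Submodule.span k {m | ∃ x ∈ spm k n, ∃ y ∈ spm k n, m = x * y - y * x}

/-- The center `{x ∈ sp(2n,k) : ⁅x,y⁆ = 0 for all y ∈ sp(2n,k)}`. -/
def spCenter (k : Type*) [Field k] (n : ℕ) :
    Set (Matrix (Fin n ⊕ Fin n) (Fin n ⊕ Fin n) k) :=
  {x ∈ spSet k n | ∀ y ∈ spSet k n, x * y - y * x = 0}

theorem add_self_eq_zero_of_charTwo (K : Type*) {M : Type*} [Ring K] [CharP K 2] [AddCommGroup M]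
    [Module K M] (x : M) : x + x = 0 := by
  rw [← two_smul K x, CharTwo.two_eq_zero, zero_smul]

theorem neg_eq_self_of_charTwo (K : Type*) {M : Type*} [Ring K] [CharP K 2] [AddCommGroup M]
    [Module K M] (x : M) : -x = x :=
  neg_eq_of_add_eq_zero_right (add_self_eq_zero_of_charTwo K x)

namespace Matrix

theorem sub_transpose_eq_sum {R ι : Type*} [CommRing R] [Fintype ι] [DecidableEq ι]
    (C : Matrix ι ι R) :
    C - Cᵀ = ∑ j, (vecMulVec (C.col j) (Pi.single j 1) - vecMulVec (Pi.single j 1) (C.col j)) := by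
  ext a b
  simp [Matrix.sum_apply, vecMulVec_apply, Pi.single_apply]

theorem exists_eq_smul_of_vecMulVec_comm {K ι : Type*} [Field K] {a b : ι → K} (ha : a ≠ 0)
    (h : vecMulVec a b = vecMulVec b a) : ∃ c : K, b = c • a := by
  obtain ⟨j, hj⟩ := Function.ne_iff.mp ha
  refine ⟨b j / a j, funext fun i => ?_⟩
  have hij := congr_fun (congr_fun h i) j
  rw [vecMulVec_apply, vecMulVec_apply] at hij
  rw [Pi.smul_apply, smul_eq_mul, div_mul_eq_mul_div, eq_div_iff hj]
  linear_combination -hij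

theorem exists_eq_vecMulVec_of_rank_eq_one {K m ι : Type*} [Field K] [Fintype m] [Fintype ι]
    [DecidableEq ι] {A : Matrix m ι K} (h : A.rank = 1) : ∃ a b, A = vecMulVec a b := by
  obtain ⟨a, -, ha⟩ := finrank_eq_one_iff'.mp h
  have hcol : ∀ j, ∃ c : K, c • a.1 = A.col j := fun j => by
    obtain ⟨c, hc⟩ := ha ⟨A *ᵥ Pi.single j 1, LinearMap.mem_range_self A.mulVecLin _⟩
    exact ⟨c, by simpa using congrArg Subtype.val hc⟩
  choose b hb using hcol
  refine ⟨a, b, ext fun i j => ?_⟩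
  rw [vecMulVec_apply, mul_comm, ← smul_eq_mul, ← Pi.smul_apply, hb]
  rfl

end Matrix

theorem exists_ne_zero_forall_mul_ne_one {K : Type*} [Field K] [Infinite K] (X : Finset K) :
    ∃ t : K, t ≠ 0 ∧ ∀ x ∈ X, t * x ≠ 1 := by
  classical
  obtain ⟨t, ht⟩ := Infinite.exists_notMem_finset (insert 0 (X.image (·⁻¹)))
  simp only [Finset.mem_insert, Finset.mem_image, not_or, not_exists, not_and] at ht
  exact ⟨t, ht.1, fun x hx htx => ht.2 x hx (eq_inv_of_mul_eq_one_left htx).symm⟩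

theorem exists_injective_avoiding_one (K ι : Type*) [Field K] [Infinite K] [Fintype ι] :
    ∃ s : ι → K, Function.Injective s ∧ (∀ i j, s i + s j ≠ 1) ∧ (∀ i, 1 + s i ≠ 0) ∧
      1 + ∑ i, s i ≠ 0 := by
  classical
  -- rescale an arbitrary injective family by a `t` avoiding finitely many bad values
  let s₀ : ι ↪ K :=
    (Fintype.equivFin ι).toEmbedding.trans (Fin.valEmbedding.trans (Infinite.natEmbedding K))
  obtain ⟨t, ht0, ht⟩ := exists_ne_zero_forall_mul_ne_one
    (Finset.image₂ (fun i j => s₀ i + s₀ j) Finset.univ Finset.univ ∪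
      Finset.univ.image (fun i => -s₀ i) ∪ {-∑ i, s₀ i})
  refine ⟨fun i => t * s₀ i, fun i j hij => s₀.injective (mul_left_cancel₀ ht0 hij),
    fun i j => ?_, fun i h => ht (-s₀ i) (by simp) (by linear_combination -h), fun h => ?_⟩
  · rw [← mul_add]; exact ht _ (by simp [Finset.mem_image₂])
  · rw [← Finset.mul_sum] at h
    exact ht (-∑ i, s₀ i) (by simp) (by linear_combination -h)

section TiltedBasis

variable {K ι : Type*} [Field K] [DecidableEq ι]

def tiltedBasis (s : ι → K) (i : ι) : ι → K := Pi.single i 1 + s i • 1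

theorem tiltedBasis_ne_zero {s : ι → K} {i : ι} (h : 1 + s i ≠ 0) : tiltedBasis s i ≠ 0 :=
  fun h0 => h (by simpa [tiltedBasis] using congr_fun h0 i)

theorem span_range_tiltedBasis [Fintype ι] {s : ι → K} (hs : 1 + ∑ i, s i ≠ 0) :
    Submodule.span K (Set.range (tiltedBasis s)) = ⊤ := by
  set W := Submodule.span K (Set.range (tiltedBasis s))
  have hsum : ∑ i, tiltedBasis s i = (1 + ∑ i, s i) • (1 : ι → K) := by
    simp only [tiltedBasis, Finset.sum_add_distrib, ← Finset.sum_smul, add_smul, one_smul]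
    congr 1
    exact Finset.univ_sum_single 1
  have hone : (1 : ι → K) ∈ W := by
    rw [← inv_smul_smul₀ hs (1 : ι → K), ← hsum]
    exact W.smul_mem _ (W.sum_mem fun i _ => Submodule.subset_span ⟨i, rfl⟩)
  rw [eq_top_iff, ← (Pi.basisFun K ι).span_eq, Submodule.span_le]
  rintro _ ⟨i, rfl⟩
  rw [Pi.basisFun_apply, show Pi.single i (1 : K) = tiltedBasis s i - s i • 1 by
    simp [tiltedBasis]]
  exact W.sub_mem (Submodule.subset_span ⟨i, rfl⟩) (W.smul_mem _ hone)

end TiltedBasis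

section Symplectic

variable {k : Type*} [Field k] {n : ℕ}

variable (k n) in
theorem spSet_eq :
    spSet k n = (LieAlgebra.Symplectic.sp (Fin n) k : Set _) := by
  have hJ : spJ k n = -Matrix.J (Fin n) k := by simp [spJ, Matrix.J, fromBlocks_neg]
  ext x
  simp [spSet, LieAlgebra.Symplectic.sp, mem_skewAdjointMatricesLieSubalgebra, hJ,
    Matrix.IsSkewAdjoint, Matrix.IsAdjointPair, add_eq_zero_iff_eq_neg, neg_eq_iff_eq_neg]

theorem mul_mem_SpGroup {g h : Matrix (Fin n ⊕ Fin n) (Fin n ⊕ Fin n) k}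
    (hg : g ∈ SpGroup k n) (hh : h ∈ SpGroup k n) : g * h ∈ SpGroup k n :=
  calc (g * h)ᵀ * spJ k n * (g * h) = hᵀ * (gᵀ * spJ k n * g) * h := by
        rw [transpose_mul]; noncomm_ring
    _ = spJ k n := by rw [hg]; exact hh

variable (k n) in
def spForm : LinearMap.BilinForm k (Fin n ⊕ Fin n → k) := Matrix.toBilin' (spJ k n)

local notation "ω" => spForm k n

theorem spForm_apply (u v : Fin n ⊕ Fin n → k) : ω u v = u ⬝ᵥ (spJ k n *ᵥ v) :=
  Matrix.toBilin'_apply' _ _ _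

def spRankOne (v : Fin n ⊕ Fin n → k) : Matrix (Fin n ⊕ Fin n) (Fin n ⊕ Fin n) k :=
  vecMulVec v v * spJ k n

theorem spRankOne_mul_spRankOne (u w : Fin n ⊕ Fin n → k) :
    spRankOne u * spRankOne w = ω u w • (vecMulVec u w * spJ k n) := by
  rw [spRankOne, spRankOne, Matrix.mul_assoc, ← Matrix.mul_assoc (spJ k n), mul_vecMulVec,
    ← Matrix.mul_assoc, vecMulVec_mul_vecMulVec, vecMulVec_smul, smul_mul_assoc, spForm_apply]

def spTransvection (u : Fin n ⊕ Fin n → k) (c : k) : Matrix (Fin n ⊕ Fin n) (Fin n ⊕ Fin n) k :=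
  1 + c • spRankOne u

theorem spTransvection_mulVec (u : Fin n ⊕ Fin n → k) (c : k) (v : Fin n ⊕ Fin n → k) :
    spTransvection u c *ᵥ v = v + (c * ω u v) • u := by
  rw [spTransvection, add_mulVec, one_mulVec, smul_mulVec, spRankOne, ← mulVec_mulVec,
    vecMulVec_mulVec, op_smul_eq_smul, smul_smul, spForm_apply]

variable (k n) in
def spAlt : (Fin n ⊕ Fin n → k) →ₗ[k] (Fin n ⊕ Fin n → k) →ₗ[k]
    Matrix (Fin n ⊕ Fin n) (Fin n ⊕ Fin n) k :=
  LinearMap.mk₂ k (fun u w => (vecMulVec u w - vecMulVec w u) * spJ k n)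
    (fun _ _ _ => by simp only [add_vecMulVec, vecMulVec_add]; noncomm_ring)
    (fun _ _ _ => by simp only [smul_vecMulVec, vecMulVec_smul, ← smul_sub, smul_mul_assoc])
    (fun _ _ _ => by simp only [add_vecMulVec, vecMulVec_add]; noncomm_ring)
    (fun _ _ _ => by simp only [smul_vecMulVec, vecMulVec_smul, ← smul_sub, smul_mul_assoc])

theorem spAlt_apply (u w : Fin n ⊕ Fin n → k) :
    spAlt k n u w = (vecMulVec u w - vecMulVec w u) * spJ k n := rfl

variable (k n) in
def spAltSpan : Submodule k (Matrix (Fin n ⊕ Fin n) (Fin n ⊕ Fin n) k) :=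
  Submodule.map₂ (spAlt k n) ⊤ ⊤

theorem spAlt_mem_spAltSpan (u w : Fin n ⊕ Fin n → k) : spAlt k n u w ∈ spAltSpan k n :=
  Submodule.apply_mem_map₂ _ trivial trivial

theorem spAltSpan_le_of_span_eq_top {ι : Type*} {W : ι → Fin n ⊕ Fin n → k}
    (hW : Submodule.span k (Set.range W) = ⊤) {p : Submodule k (Matrix _ _ k)}
    (h : ∀ i j, spAlt k n (W i) (W j) ∈ p) : spAltSpan k n ≤ p := by
  rw [spAltSpan, ← hW, Submodule.map₂_span_span, Submodule.span_le]
  rintro _ ⟨_, ⟨i, rfl⟩, _, ⟨j, rfl⟩, rfl⟩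
  exact h i j

theorem sub_transpose_mul_spJ_mem_spAltSpan (C : Matrix (Fin n ⊕ Fin n) (Fin n ⊕ Fin n) k) :
    (C - Cᵀ) * spJ k n ∈ spAltSpan k n := by
  rw [sub_transpose_eq_sum, Finset.sum_mul]
  exact Submodule.sum_mem _ fun j _ => spAlt_mem_spAltSpan _ _

variable [CharP k 2]

theorem spJ_transpose : (spJ k n)ᵀ = spJ k n := by
  simp [spJ, fromBlocks_transpose, neg_eq_self_of_charTwo k]

theorem spJ_mul_spJ : spJ k n * spJ k n = 1 := by
  simp [spJ, fromBlocks_multiply, ← fromBlocks_one, neg_eq_self_of_charTwo k]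

theorem vecMul_spJ (v : Fin n ⊕ Fin n → k) : v ᵥ* spJ k n = spJ k n *ᵥ v := by
  rw [← vecMul_transpose, spJ_transpose]

theorem spJ_mulVec_one : spJ k n *ᵥ 1 = 1 := by
  ext (i | i) <;> simp [spJ, fromBlocks_mulVec, neg_mulVec, CharTwo.neg_eq]

theorem spJ_apply_eq_zero_or_one (a b : Fin n ⊕ Fin n) : spJ k n a b = 0 ∨ spJ k n a b = 1 := by
  rcases a with a | a <;> rcases b with b | b <;>
    simp [spJ, one_apply, CharTwo.neg_eq] <;> tauto

theorem spForm_comm (u v : Fin n ⊕ Fin n → k) : ω u v = ω v u := by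
  rw [spForm_apply, spForm_apply, dotProduct_mulVec, vecMul_spJ, dotProduct_comm]

theorem spForm_self (v : Fin n ⊕ Fin n → k) : ω v v = 0 := by
  simp only [spForm_apply, spJ, fromBlocks_mulVec, dotProduct, Fintype.sum_sum_type]
  simp only [Matrix.zero_mulVec, Matrix.one_mulVec, Matrix.neg_mulVec, zero_add, add_zero,
    Sum.elim_inl, Sum.elim_inr, Pi.neg_apply, CharTwo.neg_eq, Function.comp_apply,
    mul_comm (v (Sum.inr _))]
  exact CharTwo.add_self_eq_zero (R := k) _

theorem exists_spForm_ne_zero {v : Fin n ⊕ Fin n → k} (hv : v ≠ 0) : ∃ a, ω v a ≠ 0 := by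
  have hJ : IsUnit (spJ k n).det := isUnit_det_of_left_inverse spJ_mul_spJ
  by_contra! h
  exact hv ((LinearMap.BilinForm.nondegenerate_toBilin'_of_det_ne_zero' _ hJ.ne_zero).1 v h)

theorem exists_spForm_ne_zero_ne_zero {v w : Fin n ⊕ Fin n → k} (hv : v ≠ 0) (hw : w ≠ 0) :
    ∃ z, ω v z ≠ 0 ∧ ω z w ≠ 0 := by
  obtain ⟨a, ha⟩ := exists_spForm_ne_zero hv
  obtain ⟨b, hb⟩ := exists_spForm_ne_zero hw
  rw [spForm_comm] at hb
  by_cases hwa : ω a w = 0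
  · by_cases hvb : ω v b = 0
    · refine ⟨a + b, ?_, ?_⟩ <;> simpa [hwa, hvb]
    · exact ⟨b, hvb, hb⟩
  · exact ⟨a, ha, hwa⟩

theorem spRankOne_mul_self (u : Fin n ⊕ Fin n → k) : spRankOne u * spRankOne u = 0 := by
  rw [spRankOne_mul_spRankOne, spForm_self, zero_smul]

theorem spRankOne_lie (u w : Fin n ⊕ Fin n → k) :
    spRankOne u * spRankOne w - spRankOne w * spRankOne u = ω u w • spAlt k n u w := by
  rw [spRankOne_mul_spRankOne, spRankOne_mul_spRankOne, spForm_comm w u, ← smul_sub, ← sub_mul,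
    spAlt_apply]

theorem spTransvection_mul_self (u : Fin n ⊕ Fin n → k) (c : k) :
    spTransvection u c * spTransvection u c = 1 := by
  simp only [spTransvection, add_mul, mul_add, Matrix.one_mul, Matrix.mul_one, smul_mul_smul_comm,
    spRankOne_mul_self, smul_zero, add_zero, add_assoc, add_self_eq_zero_of_charTwo k]

theorem spTransvection_mem_SpGroup (u : Fin n ⊕ Fin n → k) (c : k) :
    spTransvection u c ∈ SpGroup k n := by
  have hT : (spTransvection u c)ᵀ * spJ k n = spJ k n * spTransvection u c := by
    rw [spTransvection, spRankOne, transpose_add, transpose_one, transpose_smul, transpose_mul,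
      transpose_vecMulVec, spJ_transpose, add_mul, mul_add, smul_mul_assoc, mul_smul_comm,
      Matrix.mul_assoc, Matrix.one_mul, Matrix.mul_one]
  change (spTransvection u c)ᵀ * spJ k n * spTransvection u c = spJ k n
  rw [hT, Matrix.mul_assoc, spTransvection_mul_self, Matrix.mul_one]

theorem spTransvection_mulVec_eq {v z : Fin n ⊕ Fin n → k} (h : ω v z ≠ 0) :
    spTransvection (v + z) (ω v z)⁻¹ *ᵥ v = z := by
  rw [spTransvection_mulVec, map_add, LinearMap.add_apply, spForm_self, zero_add, spForm_comm z v,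
    inv_mul_cancel₀ h, one_smul, ← add_assoc, add_self_eq_zero_of_charTwo k, zero_add]

theorem exists_mem_SpGroup_mulVec_eq {v w : Fin n ⊕ Fin n → k} (hv : v ≠ 0) (hw : w ≠ 0) :
    ∃ g ∈ SpGroup k n, g *ᵥ v = w := by
  obtain ⟨z, hvz, hzw⟩ := exists_spForm_ne_zero_ne_zero hv hw
  refine ⟨spTransvection (z + w) (ω z w)⁻¹ * spTransvection (v + z) (ω v z)⁻¹,
    mul_mem_SpGroup (spTransvection_mem_SpGroup _ _) (spTransvection_mem_SpGroup _ _), ?_⟩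
  rw [← mulVec_mulVec, spTransvection_mulVec_eq hvz, spTransvection_mulVec_eq hzw]

theorem inv_eq_of_mem_SpGroup {g : Matrix (Fin n ⊕ Fin n) (Fin n ⊕ Fin n) k}
    (hg : g ∈ SpGroup k n) : g⁻¹ = spJ k n * gᵀ * spJ k n := by
  refine Matrix.inv_eq_left_inv ?_
  rw [Matrix.mul_assoc, Matrix.mul_assoc, ← Matrix.mul_assoc gᵀ, hg, spJ_mul_spJ]

theorem conj_spRankOne {g : Matrix (Fin n ⊕ Fin n) (Fin n ⊕ Fin n) k} (hg : g ∈ SpGroup k n)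
    (v : Fin n ⊕ Fin n → k) : g * spRankOne v * g⁻¹ = spRankOne (g *ᵥ v) := by
  rw [inv_eq_of_mem_SpGroup hg, spRankOne, spRankOne, Matrix.mul_assoc, Matrix.mul_assoc,
    ← Matrix.mul_assoc (spJ k n), ← Matrix.mul_assoc (spJ k n), spJ_mul_spJ, Matrix.one_mul,
    ← Matrix.mul_assoc, ← Matrix.mul_assoc, mul_vecMulVec, vecMulVec_mul, vecMul_transpose]

theorem mem_spSet_iff_isSymm {x : Matrix (Fin n ⊕ Fin n) (Fin n ⊕ Fin n) k} :
    x ∈ spSet k n ↔ (x * spJ k n).IsSymm := by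
  have hJ : spJ k n * spJ k n = 1 := spJ_mul_spJ
  rw [spSet, Set.mem_ofPred_eq, add_eq_zero_iff_eq_neg, neg_eq_self_of_charTwo k, IsSymm,
    transpose_mul, spJ_transpose]
  constructor <;> intro h
  · calc spJ k n * xᵀ = spJ k n * (xᵀ * spJ k n) * spJ k n := by
          rw [Matrix.mul_assoc, Matrix.mul_assoc, hJ, Matrix.mul_one]
      _ = x * spJ k n := by rw [h, ← Matrix.mul_assoc, hJ, Matrix.one_mul]
  · calc xᵀ * spJ k n = spJ k n * (spJ k n * xᵀ) * spJ k n := by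
          rw [← Matrix.mul_assoc, hJ, Matrix.one_mul]
      _ = spJ k n * x := by rw [h, Matrix.mul_assoc, Matrix.mul_assoc, hJ, Matrix.mul_one]

theorem exists_eq_smul_spRankOne {x : Matrix (Fin n ⊕ Fin n) (Fin n ⊕ Fin n) k}
    (hx : x ∈ spSet k n) (hrank : x.rank = 1) :
    ∃ c : k, ∃ v, c ≠ 0 ∧ v ≠ 0 ∧ x = c • spRankOne v := by
  obtain ⟨v, w, rfl⟩ := exists_eq_vecMulVec_of_rank_eq_one hrank
  have hvw : vecMulVec v w ≠ 0 := by rintro h; simp [h] at hrank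
  obtain ⟨hv, hw⟩ : v ≠ 0 ∧ w ≠ 0 := by simpa [not_or] using hvw
  have hsymm : vecMulVec v (spJ k n *ᵥ w) = vecMulVec (spJ k n *ᵥ w) v := by
    have h := mem_spSet_iff_isSymm.mp hx
    rwa [vecMulVec_mul, vecMul_spJ, IsSymm, transpose_vecMulVec, eq_comm] at h
  obtain ⟨c, hc⟩ := exists_eq_smul_of_vecMulVec_comm hv hsymm
  have hwc : w = c • (spJ k n *ᵥ v) := by
    rw [← mulVec_smul, ← hc, mulVec_mulVec, spJ_mul_spJ, one_mulVec]
  refine ⟨c, v, fun hc0 => hw (by simp [hwc, hc0]), hv, ?_⟩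
  rw [hwc, spRankOne, vecMulVec_mul, vecMul_spJ, vecMulVec_smul]

theorem mul_sub_mul_mem_spAltSpan {x y : Matrix (Fin n ⊕ Fin n) (Fin n ⊕ Fin n) k}
    (hx : (x * spJ k n).IsSymm) (hy : (y * spJ k n).IsSymm) :
    x * y - y * x ∈ spAltSpan k n := by
  have hx' : spJ k n * xᵀ = x * spJ k n := by
    simpa only [IsSymm, transpose_mul, spJ_transpose] using hx
  have hy' : spJ k n * yᵀ = y * spJ k n := by
    simpa only [IsSymm, transpose_mul, spJ_transpose] using hy
  have hD : (x * y * spJ k n)ᵀ = y * x * spJ k n := by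
    rw [transpose_mul, transpose_mul, spJ_transpose, ← Matrix.mul_assoc, hy', Matrix.mul_assoc,
      hx', ← Matrix.mul_assoc]
  have : x * y - y * x = (x * y * spJ k n - (x * y * spJ k n)ᵀ) * spJ k n := by
    rw [hD, sub_mul, Matrix.mul_assoc, Matrix.mul_assoc (y * x), spJ_mul_spJ, Matrix.mul_one,
      Matrix.mul_one]
  rw [this]
  exact sub_transpose_mul_spJ_mem_spAltSpan _

theorem spAltSpan_le_sp : spAltSpan k n ≤ (LieAlgebra.Symplectic.sp (Fin n) k).toSubmodule := by
  refine Submodule.map₂_le.mpr fun u _ w _ => ?_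
  rw [LieSubalgebra.mem_toSubmodule, ← SetLike.mem_coe, ← spSet_eq, mem_spSet_iff_isSymm,
    spAlt_apply, Matrix.mul_assoc, spJ_mul_spJ, Matrix.mul_one, IsSymm, transpose_sub,
    transpose_vecMulVec, transpose_vecMulVec, ← neg_sub, neg_eq_self_of_charTwo k]

theorem spn_le_spAltSpan : spn k n ≤ spAltSpan k n := by
  have hsymm : ∀ x ∈ spAltSpan k n, (x * spJ k n).IsSymm := fun x hx => by
    rw [← mem_spSet_iff_isSymm, spSet_eq]
    exact spAltSpan_le_sp hx
  have hspm : spm k n ≤ spAltSpan k n := Submodule.span_le.mpr <| by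
    rintro _ ⟨x, hx, y, hy, rfl⟩
    exact mul_sub_mul_mem_spAltSpan (mem_spSet_iff_isSymm.mp hx) (mem_spSet_iff_isSymm.mp hy)
  refine Submodule.span_le.mpr ?_
  rintro _ ⟨x, hx, y, hy, rfl⟩
  exact mul_sub_mul_mem_spAltSpan (hsymm x (hspm hx)) (hsymm y (hspm hy))

theorem spAlt_mem_of_smul_spRankOne_mem
    (L : LieSubalgebra k (Matrix (Fin n ⊕ Fin n) (Fin n ⊕ Fin n) k)) {c : k} (hc : c ≠ 0)
    {u w : Fin n ⊕ Fin n → k} (huw : ω u w ≠ 0) (hu : c • spRankOne u ∈ L)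
    (hw : c • spRankOne w ∈ L) : spAlt k n u w ∈ L := by
  have h := L.lie_mem hu hw
  rw [Ring.lie_def, smul_mul_smul_comm, smul_mul_smul_comm, ← smul_sub, spRankOne_lie,
    smul_smul] at h
  exact (L.toSubmodule.smul_mem_iff (mul_ne_zero (mul_ne_zero hc hc) huw)).mp h

theorem spForm_tiltedBasis (s : Fin n ⊕ Fin n → k) (a b : Fin n ⊕ Fin n) :
    ω (tiltedBasis s a) (tiltedBasis s b) = spJ k n a b + s a + s b := by
  have hsingle : ω (Pi.single a 1) (Pi.single b 1) = spJ k n a b := by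
    simp [spForm_apply]
  have hone : ∀ c, ω (Pi.single c 1) 1 = 1 := fun c => by simp [spForm_apply, spJ_mulVec_one]
  simp only [tiltedBasis, map_add, map_smul, LinearMap.add_apply, LinearMap.smul_apply, hsingle,
    hone, spForm_comm 1, spForm_self, smul_eq_mul]
  ring

theorem spForm_tiltedBasis_ne_zero {s : Fin n ⊕ Fin n → k} (hinj : Function.Injective s)
    (hs : ∀ a b, s a + s b ≠ 1) {a b : Fin n ⊕ Fin n} (hab : a ≠ b) :
    ω (tiltedBasis s a) (tiltedBasis s b) ≠ 0 := by
  rw [spForm_tiltedBasis, add_assoc]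
  rcases spJ_apply_eq_zero_or_one (k := k) a b with h | h <;> rw [h]
  · rw [zero_add, Ne, CharTwo.add_eq_zero]
    exact hinj.ne hab
  · rw [Ne, CharTwo.add_eq_zero]
    exact (hs a b).symm

end Symplectic

theorem stmt5_general (k : Type*) [Field k] [IsAlgClosed k] [CharP k 2] (n : ℕ)
    (x : Matrix (Fin n ⊕ Fin n) (Fin n ⊕ Fin n) k)
    (hx : x ∈ spSet k n) (hrank : x.rank = 1) :
    ∃ g : Fin (max 8 (2 * n)) → Matrix (Fin n ⊕ Fin n) (Fin n ⊕ Fin n) k,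
      (∀ i, g i ∈ SpGroup k n) ∧
      (spn k n : Set (Matrix (Fin n ⊕ Fin n) (Fin n ⊕ Fin n) k)) ⊆
        (LieSubalgebra.lieSpan k (Matrix (Fin n ⊕ Fin n) (Fin n ⊕ Fin n) k)
          {y | ∃ i, y = g i * x * (g i)⁻¹} :
            Set (Matrix (Fin n ⊕ Fin n) (Fin n ⊕ Fin n) k)) := by
  obtain ⟨c, v, hc, hv, rfl⟩ := exists_eq_smul_spRankOne hx hrank
  obtain ⟨s, hinj, hs, hs1, hsum⟩ := exists_injective_avoiding_one k (Fin n ⊕ Fin n)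
  choose g hg hgv using fun a => exists_mem_SpGroup_mulVec_eq hv (tiltedBasis_ne_zero (hs1 a))
  have : Nonempty (Fin n ⊕ Fin n) := not_isEmpty_iff.mp fun _ => hv (Subsingleton.elim _ _)
  obtain ⟨p, hp⟩ := Function.exists_surjective_iff.mpr ⟨inferInstance,
    Function.Embedding.nonempty_of_card_le (α := Fin n ⊕ Fin n) (β := Fin (max 8 (2 * n)))
      (by simp only [Fintype.card_sum, Fintype.card_fin]; omega)⟩
  refine ⟨g ∘ p, fun i => hg (p i), ?_⟩
  set L := LieSubalgebra.lieSpan k _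
    {y | ∃ i, y = (g ∘ p) i * (c • spRankOne v) * ((g ∘ p) i)⁻¹}
  have hL : ∀ a, c • spRankOne (tiltedBasis s a) ∈ L := fun a => by
    obtain ⟨i, rfl⟩ := hp a
    refine LieSubalgebra.subset_lieSpan ⟨i, ?_⟩
    rw [Function.comp_apply, mul_smul_comm, smul_mul_assoc, conj_spRankOne (hg _), hgv]
  have hAlt : spAltSpan k n ≤ L.toSubmodule :=
    spAltSpan_le_of_span_eq_top (span_range_tiltedBasis hsum) fun a b => by
      rcases eq_or_ne a b with rfl | hab
      · simp [spAlt_apply]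
      · exact spAlt_mem_of_smul_spRankOne_mem L hc (spForm_tiltedBasis_ne_zero hinj hs hab)
          (hL a) (hL b)
  exact fun m hm => hAlt (spn_le_spAltSpan hm)

/-- Let `k` be algebraically closed of characteristic 2, `n ≥ 3`, and let
`x ∈ sp(2n,k)` satisfy `x·x = 0` and `rank x = 1`. With `e = max(8, 2n)`, there exist
`g₁, …, g_e ∈ Sp(2n,k)` such that the smallest Lie subalgebra containing the conjugates
`gᵢ x gᵢ⁻¹` contains `𝔫`. -/
theorem stmt5 (k : Type*) [Field k] [IsAlgClosed k] [CharP k 2] (n : ℕ) (hn : 3 ≤ n)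
    (x : Matrix (Fin n ⊕ Fin n) (Fin n ⊕ Fin n) k)
    (hx : x ∈ spSet k n) (hx2 : x * x = 0) (hrank : x.rank = 1) :
    ∃ g : Fin (max 8 (2 * n)) → Matrix (Fin n ⊕ Fin n) (Fin n ⊕ Fin n) k,
      (∀ i, g i ∈ SpGroup k n) ∧
      (spn k n : Set (Matrix (Fin n ⊕ Fin n) (Fin n ⊕ Fin n) k)) ⊆
        (LieSubalgebra.lieSpan k (Matrix (Fin n ⊕ Fin n) (Fin n ⊕ Fin n) k)
          {y | ∃ i, y = g i * x * (g i)⁻¹} :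
            Set (Matrix (Fin n ⊕ Fin n) (Fin n ⊕ Fin n) k)) :=
  stmt5_general k n x hx hrank
end
end

section
/- Let k be a field of characteristic 2, V a finite-dimensional k-vector space of dimension 2n, B a nondegenerate alternating bilinear form on V, and W ⊆ V a totally isotropic subspace of dimension r. Let C be the set of linear maps y : V → V such that B(yv, w) = B(v, yw) for all v, w ∈ V and range y ⊆ W. Then C is a k-linear subspace of End(V) of dimension r(r+1)/2, and every y ∈ C satisfies y ∘ y = 0 and W^⊥ ⊆ ker y. -/
/-!
An alternating form is reflexive, so for `y` self-adjoint with range in `W` and `x ∈ W^⊥` we get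
`B (y x) z = B x (y z) = 0` for all `z`, whence `y x = 0`; as `W ⊆ W^⊥`, also `y ∘ y = 0`.
In characteristic 2 the form is moreover symmetric. Choose a basis `wᵢ` of `W` and, by
nondegeneracy, `vⱼ ∈ V` with `B (vⱼ, wᵢ) = δᵢⱼ`. Since `y` kills `x - ∑ B (wᵢ, x) vᵢ ∈ W^⊥`,
every `y ∈ C` is `x ↦ ∑ gᵢⱼ B (wⱼ, x) wᵢ` for the symmetric matrix `gᵢⱼ = B (vᵢ, y vⱼ)`,
and conversely every symmetric `g` gives a map in `C` from which `g` is read off the same way.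
Hence `C` is isomorphic to the functions on `Sym2 (Fin r)`, of dimension `r (r + 1) / 2`.
-/

open Module

namespace LinearMap

variable {k V : Type*} [Field k] [AddCommGroup V] [Module k V] {B : V →ₗ[k] V →ₗ[k] k}

theorem IsAlt.isSymm_of_charTwo [CharP k 2] (hB : B.IsAlt) : BilinForm.IsSymm B :=
  ⟨fun x y => (CharTwo.neg_eq _).symm.trans (hB.neg x y)⟩

variable (B) in
def selfAdjointInto (W : Submodule k V) : Submodule k (Module.End k V) where
  carrier := {y | B.IsSelfAdjoint y ∧ range y ≤ W}
  zero_mem' := ⟨(B.selfAdjointSubmodule).zero_mem, by simp⟩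
  add_mem' {y z} hy hz := ⟨(B.selfAdjointSubmodule).add_mem hy.1 hz.1, by
    rintro _ ⟨x, rfl⟩
    exact W.add_mem (hy.2 (mem_range_self y x)) (hz.2 (mem_range_self z x))⟩
  smul_mem' c y hy := ⟨(B.selfAdjointSubmodule).smul_mem c hy.1, by
    rintro _ ⟨x, rfl⟩
    exact W.smul_mem c (hy.2 (mem_range_self y x))⟩

variable {W : Submodule k V} {y : Module.End k V}

theorem apply_eq_zero_of_mem_selfAdjointInto (hB : B.IsRefl) (hsep : B.SeparatingLeft)
    (hy : y ∈ B.selfAdjointInto W) {x : V} (hx : x ∈ W.orthogonalBilin B) : y x = 0 :=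
  hsep _ fun z => by
    rw [hy.1]
    exact hB _ _ (hx _ (hy.2 (mem_range_self y z)))

theorem comp_self_eq_zero_of_mem_selfAdjointInto (hB : B.IsRefl) (hsep : B.SeparatingLeft)
    (hW : W ≤ W.orthogonalBilin B) (hy : y ∈ B.selfAdjointInto W) : y ∘ₗ y = 0 :=
  ext fun x => apply_eq_zero_of_mem_selfAdjointInto hB hsep hy (hW (hy.2 (mem_range_self y x)))

theorem exists_dual_family [FiniteDimensional k V] (hB : B.IsRefl) (hsep : B.SeparatingLeft)
    {ι : Type*} (b : Basis ι k W) : ∃ v : ι → V, ∀ j (w : W), B (v j) w = b.coord j w := by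
  let e := BilinForm.toDual B (hB.nondegenerate_iff_separatingLeft.mpr hsep)
  exact ⟨fun j => e.symm (Subspace.dualLift W (b.coord j)), fun j w => by
    simp [e, Subspace.dualLift_of_mem w.2]⟩

section Coordinates

variable {ι : Type*} {b : Basis ι k W} {v : ι → V}

theorem apply_basis_eq_ite [DecidableEq ι] (hv : ∀ j (u : W), B (v j) u = b.coord j u) (i j : ι) :
    B (v j) (b i) = if i = j then 1 else 0 := by
  rw [hv]
  simp [Finsupp.single_apply]

variable [Fintype ι]

variable (B) in
def endOfSym2 (w : ι → V) : (Sym2 ι → k) →ₗ[k] Module.End k V :=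
  ∑ i, ∑ j, (proj s(i, j)).smulRight ((B (w j)).smulRight (w i))

theorem endOfSym2_apply (w : ι → V) (g : Sym2 ι → k) (x : V) :
    endOfSym2 B w g x = ∑ i, ∑ j, (g s(i, j) * B (w j) x) • w i := by
  simp [endOfSym2, sum_apply, smul_smul]

theorem endOfSym2_mem (hB : BilinForm.IsSymm B) {w : ι → V} (hw : ∀ i, w i ∈ W)
    (g : Sym2 ι → k) : endOfSym2 B w g ∈ B.selfAdjointInto W := by
  refine ⟨fun x z => ?_, ?_⟩
  · simp only [endOfSym2_apply, map_sum, map_smul, sum_apply, smul_apply, smul_eq_mul]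
    rw [Finset.sum_comm]
    refine Finset.sum_congr rfl fun i _ => Finset.sum_congr rfl fun j _ => ?_
    rw [Sym2.eq_swap, hB.eq (w j) z, hB.eq x (w i)]
    ring
  · rintro _ ⟨x, rfl⟩
    rw [endOfSym2_apply]
    exact Submodule.sum_mem _ fun i _ => Submodule.sum_mem _ fun j _ => W.smul_mem _ (hw i)

theorem eq_sum_of_mem (hv : ∀ j (u : W), B (v j) u = b.coord j u) {z : V} (hz : z ∈ W) :
    z = ∑ i, B (v i) z • (b i : V) := by
  have h := congrArg W.subtype (b.sum_repr ⟨z, hz⟩)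
  simp only [map_sum, map_smul, Submodule.subtype_apply] at h
  calc z = _ := h.symm
    _ = _ := Finset.sum_congr rfl fun i _ => by rw [hv i ⟨z, hz⟩, Basis.coord_apply]

theorem sub_sum_mem_orthogonalBilin (hB : BilinForm.IsSymm B)
    (hv : ∀ j (u : W), B (v j) u = b.coord j u) (x : V) :
    x - ∑ i, B (b i) x • v i ∈ W.orthogonalBilin B := by
  intro u hu
  have hu' := eq_sum_of_mem hv hu
  simp only [map_sub, map_sum, map_smul, smul_eq_mul]
  conv_lhs => arg 1; rw [hu']
  simp [sum_apply, hB.eq u, mul_comm]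

theorem endOfSym2_apply_dual (hB : BilinForm.IsSymm B)
    (hv : ∀ j (u : W), B (v j) u = b.coord j u) (g : Sym2 ι → k) (a : ι) :
    endOfSym2 B (fun i => (b i : V)) g (v a) = ∑ i, g s(i, a) • (b i : V) := by
  classical
  simp [endOfSym2_apply, hB.eq _ (v a), apply_basis_eq_ite hv]

theorem endOfSym2_injective (hB : BilinForm.IsSymm B)
    (hv : ∀ j (u : W), B (v j) u = b.coord j u) :
    Function.Injective (endOfSym2 B fun i => (b i : V)) := by
  classical
  refine (injective_iff_map_eq_zero _).mpr fun g hg => funext fun s => ?_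
  induction s using Sym2.ind with | _ c a => ?_
  have := congrArg (fun y : Module.End k V => B (v c) (y (v a))) hg
  simpa [endOfSym2_apply_dual hB hv, apply_basis_eq_ite hv] using this

theorem eq_endOfSym2_of_mem (hB : BilinForm.IsSymm B) (hsep : B.SeparatingLeft)
    (hv : ∀ j (u : W), B (v j) u = b.coord j u) (hy : y ∈ B.selfAdjointInto W) :
    y = endOfSym2 B (fun i => (b i : V))
      (Sym2.lift ⟨fun a c => B (v a) (y (v c)), fun a c => by
        show B (v a) (y (v c)) = B (v c) (y (v a))
        rw [← hy.1, hB.eq]⟩) := by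
  ext x
  have hyx : y x = ∑ i, B (b i) x • y (v i) := by
    have := apply_eq_zero_of_mem_selfAdjointInto hB.isRefl hsep hy
      (sub_sum_mem_orthogonalBilin hB hv x)
    simpa [sub_eq_zero] using this
  have hyv : ∀ i, y (v i) = ∑ j, B (v j) (y (v i)) • (b j : V) :=
    fun i => eq_sum_of_mem hv (hy.2 (mem_range_self y (v i)))
  rw [hyx, endOfSym2_apply, Finset.sum_comm]
  refine Finset.sum_congr rfl fun i _ => ?_
  rw [hyv i, Finset.smul_sum]
  refine Finset.sum_congr rfl fun j _ => ?_
  rw [smul_smul, Sym2.lift_mk, mul_comm]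

theorem finrank_selfAdjointInto [FiniteDimensional k V] (hB : BilinForm.IsSymm B)
    (hsep : B.SeparatingLeft) (b : Basis ι k W) :
    finrank k (B.selfAdjointInto W) = Fintype.card (Sym2 ι) := by
  obtain ⟨v, hv⟩ := exists_dual_family hB.isRefl hsep b
  have hrange : range (endOfSym2 B fun i => (b i : V)) = B.selfAdjointInto W :=
    le_antisymm (by rintro _ ⟨g, rfl⟩; exact endOfSym2_mem hB (fun i => (b i).2) g)
      fun y hy => ⟨_, (eq_endOfSym2_of_mem hB hsep hv hy).symm⟩
  rw [← hrange, finrank_range_of_inj (endOfSym2_injective hB hv),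
    Module.finrank_fintype_fun_eq_card]

end Coordinates

end LinearMap

open LinearMap

theorem stmt12_general (k V : Type*) [Field k] [CharP k 2] [AddCommGroup V] [Module k V]
    [FiniteDimensional k V]
    (B : V →ₗ[k] V →ₗ[k] k)
    (halt : ∀ v : V, B v v = 0)
    (hnd1 : ∀ v : V, (∀ w : V, B v w = 0) → v = 0)
    (W : Submodule k V) (r : ℕ) (hr : Module.finrank k W = r)
    (hW : ∀ w ∈ W, ∀ w' ∈ W, B w w' = 0)
    (C : Set (V →ₗ[k] V))
    (hC : C = {y : V →ₗ[k] V |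
      (∀ v w : V, B (y v) w = B v (y w)) ∧ LinearMap.range y ≤ W}) :
    (∃ S : Submodule k (V →ₗ[k] V), (S : Set (V →ₗ[k] V)) = C ∧
      Module.finrank k S = r * (r + 1) / 2) ∧
    (∀ y ∈ C, y ∘ₗ y = 0 ∧ ∀ v : V, (∀ u ∈ W, B u v = 0) → y v = 0) := by
  subst hC
  have hWW : W ≤ W.orthogonalBilin B := fun w hw u hu => hW u hu w hw
  refine ⟨⟨B.selfAdjointInto W, rfl, ?_⟩, fun y hy =>
    ⟨comp_self_eq_zero_of_mem_selfAdjointInto (IsAlt.isRefl halt) hnd1 hWW hy,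
      fun x hx => apply_eq_zero_of_mem_selfAdjointInto (IsAlt.isRefl halt) hnd1 hy hx⟩⟩
  rw [finrank_selfAdjointInto (IsAlt.isSymm_of_charTwo halt) hnd1
      (finBasisOfFinrankEq k W hr), Sym2.card, Fintype.card_fin, Nat.choose_two_right,
    Nat.add_sub_cancel, Nat.mul_comm]

/-- Let `k` have characteristic 2, `V` a `2n`-dimensional `k`-vector space with a
nondegenerate alternating bilinear form `B`, and `W ⊆ V` a totally isotropic subspace of
dimension `r`. Let `C` be the set of linear maps `y : V → V` that are self-adjoint for
`B` and have `range y ⊆ W`. Then `C` is a `k`-linear subspace of `End(V)` of dimension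
`r(r+1)/2`, and every `y ∈ C` satisfies `y ∘ y = 0` and `W^⊥ ⊆ ker y`. -/
theorem stmt12 (k V : Type*) [Field k] [CharP k 2] [AddCommGroup V] [Module k V]
    [FiniteDimensional k V] (n : ℕ)
    (hdim : Module.finrank k V = 2 * n)
    (B : V →ₗ[k] V →ₗ[k] k)
    (halt : ∀ v : V, B v v = 0)
    (hnd1 : ∀ v : V, (∀ w : V, B v w = 0) → v = 0)
    (hnd2 : ∀ w : V, (∀ v : V, B v w = 0) → w = 0)
    (W : Submodule k V) (r : ℕ) (hr : Module.finrank k W = r)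
    (hW : ∀ w ∈ W, ∀ w' ∈ W, B w w' = 0)
    (C : Set (V →ₗ[k] V))
    (hC : C = {y : V →ₗ[k] V |
      (∀ v w : V, B (y v) w = B v (y w)) ∧ LinearMap.range y ≤ W}) :
    (∃ S : Submodule k (V →ₗ[k] V), (S : Set (V →ₗ[k] V)) = C ∧
      Module.finrank k S = r * (r + 1) / 2) ∧
    (∀ y ∈ C, y ∘ₗ y = 0 ∧ ∀ v : V, (∀ u ∈ W, B u v = 0) → y v = 0) :=
  stmt12_general k V B halt hnd1 W r hr hW C hC
end
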